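/- Let P be a formula-based program, α a countable ordinal, and for every γ < α let I_γ be an interpretation such that I_ζ =_ζ I_γ for all ζ < γ < α. If I_γ ⊑_{γ+1} T_P(I_γ) holds for all γ < α, then ⊔_{γ<α} I_γ ⊑_α T_P(⊔_{γ<α} I_γ). -/

import Mathlib

/-!
Infinite-valued semantics for formula-based logic programs
(Rondogiannis–Wadge style), following Lüdecke,
"Every Formula-Based Logic Program Has a Least Infinite-Valued Model".
-/

noncomputable section

namespace ILP

attribute [local instance] Classical.propDecidable

/-- The first uncountable ordinal. -/
def omega1 : Ordinal.{0} := Ordinal.omega 1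

lemma omega1_isLimit : Order.IsSuccLimit omega1 := Cardinal.isSuccLimit_omega 1

lemma zero_lt_omega1 : (0 : Ordinal) < omega1 := pos_iff_ne_zero.2 omega1_isLimit.ne_bot

lemma succ_lt_omega1 {a : Ordinal} (h : a < omega1) : a + 1 < omega1 := by
  rw [Ordinal.add_one_eq_succ]
  exact omega1_isLimit.succ_lt h

/-- Pre-truth-values: `F α`, `0`, `T α` for arbitrary ordinals `α`. -/
inductive TVPre : Type 1 where
  | F : Ordinal → TVPre
  | zero : TVPre
  | T : Ordinal → TVPre

/-- A pre-truth-value is countable if its index is a countable ordinal. -/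
def TVPre.countable : TVPre → Prop
  | .F a => a < omega1
  | .zero => True
  | .T a => a < omega1

/-- The set `W` of truth values:
`F_α` (false values) for countable `α`, `0`, and `T_α` (true values) for countable `α`. -/
def W : Type 1 := {v : TVPre // v.countable}

/-- The strict order on truth values:
`F_0 < F_1 < ... < 0 < ... < T_1 < T_0`. -/
def TVPre.lt : TVPre → TVPre → Prop
  | .F a, .F b => a < b
  | .F _, .zero => True
  | .F _, .T _ => True
  | .zero, .T _ => True
  | .T a, .T b => b < a
  | _, _ => False

instance : LT W := ⟨fun x y => TVPre.lt x.1 y.1⟩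

instance : LE W := ⟨fun x y => x = y ∨ x < y⟩

lemma TVPre.lt_trans {a b c : TVPre} (hab : a.lt b) (hbc : b.lt c) : a.lt c := by
  cases a <;> cases b <;> cases c <;> simp_all [TVPre.lt] <;>
    first | exact hab.trans hbc | exact hbc.trans hab

lemma TVPre.lt_irrefl {a : TVPre} (h : a.lt a) : False := by
  cases a <;> simp_all [TVPre.lt]

instance instLinearOrderW : LinearOrder W where
  le_refl a := Or.inl rfl
  le_trans a b c hab hbc := by
    rcases hab with rfl | hab
    · exact hbc
    rcases hbc with rfl | hbc
    · exact Or.inr hab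
    · exact Or.inr (TVPre.lt_trans hab hbc)
  le_antisymm a b hab hba := by
    rcases hab with rfl | hab
    · rfl
    rcases hba with rfl | hba
    · rfl
    exact absurd (TVPre.lt_trans hab hba) TVPre.lt_irrefl
  le_total a b := by
    obtain ⟨a1, ha⟩ := a
    obtain ⟨b1, hb⟩ := b
    have tri : a1 = b1 ∨ a1.lt b1 ∨ b1.lt a1 := by
      cases a1 <;> cases b1 <;> simp [TVPre.lt] <;> (try rename_i x y) <;>
        (try rcases lt_trichotomy x y with h | h | h) <;> tauto
    rcases tri with h | h | h
    · exact Or.inl (Or.inl (Subtype.ext h))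
    · exact Or.inl (Or.inr h)
    · exact Or.inr (Or.inr h)
  lt_iff_le_not_ge a b := by
    constructor
    · intro h
      refine ⟨Or.inr h, ?_⟩
      rintro (rfl | h')
      · exact TVPre.lt_irrefl h
      · exact TVPre.lt_irrefl (TVPre.lt_trans h h')
    · rintro ⟨rfl | h, h2⟩
      · exact absurd (Or.inl rfl) h2
      · exact h
  toDecidableLE := Classical.decRel _

/-- The false value `F_α`. -/
def WF (a : Ordinal) (h : a < omega1) : W := ⟨.F a, h⟩

/-- The true value `T_α`. -/
def WT (a : Ordinal) (h : a < omega1) : W := ⟨.T a, h⟩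

/-- The undefined value `0`. -/
def WZ : W := ⟨.zero, trivial⟩

/-- `deg w < α` : the degree of `w` (which is `∞` for `0`) is less than `α`. -/
def degLT (w : W) (α : Ordinal) : Prop :=
  match w.1 with
  | .F a => a < α
  | .zero => False
  | .T a => a < α

/-- The set of indices of true values occurring in `M`. -/
def TIdx (M : Set W) : Set Ordinal := {a | ∃ w ∈ M, w.1 = TVPre.T a}

/-- The set of indices of false values occurring in `M`. -/
def FIdx (M : Set W) : Set Ordinal := {a | ∃ w ∈ M, w.1 = TVPre.F a}

lemma mem_lt_omega1_of_TIdx {M : Set W} {a : Ordinal} (h : a ∈ TIdx M) : a < omega1 := by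
  obtain ⟨w, _, hw⟩ := h
  have := w.2
  rw [hw] at this
  exact this

lemma mem_lt_omega1_of_FIdx {M : Set W} {a : Ordinal} (h : a ∈ FIdx M) : a < omega1 := by
  obtain ⟨w, _, hw⟩ := h
  have := w.2
  rw [hw] at this
  exact this

/-- The least upper bound of a subset of `W`. -/
def Wsup (M : Set W) : W :=
  if h : (TIdx M).Nonempty then
    WT (sInf (TIdx M))
      (lt_of_le_of_lt (csInf_le' h.choose_spec) (mem_lt_omega1_of_TIdx h.choose_spec))
  else if WZ ∈ M then WZ
  else if h2 : sSup (FIdx M) < omega1 then WF (sSup (FIdx M)) h2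
  else WZ

/-- The greatest lower bound of a subset of `W`. -/
def Winf (M : Set W) : W :=
  if h : (FIdx M).Nonempty then
    WF (sInf (FIdx M))
      (lt_of_le_of_lt (csInf_le' h.choose_spec) (mem_lt_omega1_of_FIdx h.choose_spec))
  else if WZ ∈ M then WZ
  else if h2 : sSup (TIdx M) < omega1 then WT (sSup (TIdx M)) h2
  else WZ

/-- The semantics of negation on `W`. -/
def Wneg : W → W
  | ⟨.F a, h⟩ => WT (a + 1) (succ_lt_omega1 h)
  | ⟨.zero, _⟩ => WZ
  | ⟨.T a, h⟩ => WF (a + 1) (succ_lt_omega1 h)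

/-! ### Syntax -/

/-- A first-order language with finitely many predicate symbols (at least one),
finitely many function symbols and finitely many constants (at least one). -/
structure Language where
  nPred : ℕ
  predAr : Fin nPred → ℕ
  nFun : ℕ
  funAr : Fin nFun → ℕ
  nConst : ℕ
  npos : 1 ≤ nPred
  cpos : 1 ≤ nConst

variable {L : Language}

/-- Terms of the language; variables are indexed by natural numbers. -/
inductive Term (L : Language) : Type where
  | var : ℕ → Term L
  | const : Fin L.nConst → Term L
  | func : (f : Fin L.nFun) → (Fin (L.funAr f) → Term L) → Term L

/-- A term is ground if it contains no variables. -/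
def Term.ground : Term L → Prop
  | .var _ => False
  | .const _ => True
  | .func _ ts => ∀ i, (ts i).ground

/-- The Herbrand universe: the set of ground terms. -/
def HU (L : Language) : Type := {t : Term L // t.ground}

/-- Formulas of the language. -/
inductive Formula (L : Language) : Type where
  | verum : Formula L
  | falsum : Formula L
  | atom : (p : Fin L.nPred) → (Fin (L.predAr p) → Term L) → Formula L
  | neg : Formula L → Formula L
  | conj : Formula L → Formula L → Formula L
  | disj : Formula L → Formula L → Formula L
  | all : ℕ → Formula L → Formula L
  | ex : ℕ → Formula L → Formula L

/-- A ground atom: a predicate symbol applied to ground terms.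
The Herbrand base `H_B` is the type of ground atoms. -/
structure GroundAtom (L : Language) : Type where
  pred : Fin L.nPred
  args : Fin (L.predAr pred) → HU L

/-- An (infinite-valued Herbrand) interpretation. -/
def Interp (L : Language) : Type 1 := GroundAtom L → W

/-- Evaluation of a term under a variable assignment. -/
def Term.evalT (h : ℕ → HU L) : Term L → HU L
  | .var n => h n
  | .const c => ⟨.const c, trivial⟩
  | .func f ts => ⟨.func f fun i => ((ts i).evalT h).1, fun i => ((ts i).evalT h).2⟩

/-- The infinite-valued semantics of formulas, relative to an interpretation and
a variable assignment. -/
def Formula.eval (I : Interp L) : Formula L → (ℕ → HU L) → W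
  | .verum, _ => WT 0 zero_lt_omega1
  | .falsum, _ => WF 0 zero_lt_omega1
  | .atom p ts, h => I ⟨p, fun i => (ts i).evalT h⟩
  | .neg φ, h => Wneg (φ.eval I h)
  | .conj φ ψ, h => min (φ.eval I h) (ψ.eval I h)
  | .disj φ ψ, h => max (φ.eval I h) (ψ.eval I h)
  | .ex v φ, h => Wsup (Set.range fun u : HU L => φ.eval I (Function.update h v u))
  | .all v φ, h => Winf (Set.range fun u : HU L => φ.eval I (Function.update h v u))

/-- The variables occurring in a term. -/
def Term.vars : Term L → Set ℕ
  | .var n => {n}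
  | .const _ => ∅
  | .func _ ts => ⋃ i, (ts i).vars

/-- The free variables of a formula. -/
def Formula.freeVars : Formula L → Set ℕ
  | .verum => ∅
  | .falsum => ∅
  | .atom _ ts => ⋃ i, (ts i).vars
  | .neg φ => φ.freeVars
  | .conj φ ψ => φ.freeVars ∪ ψ.freeVars
  | .disj φ ψ => φ.freeVars ∪ ψ.freeVars
  | .all v φ => φ.freeVars \ {v}
  | .ex v φ => φ.freeVars \ {v}

/-- Applying a substitution to a term. -/
def Term.subst (σ : ℕ → Term L) : Term L → Term L
  | .var n => σ n
  | .const c => .const c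
  | .func f ts => .func f fun i => (ts i).subst σ

/-- Applying a substitution to a formula (bound variables are not substituted). -/
def Formula.subst (σ : ℕ → Term L) : Formula L → Formula L
  | .verum => .verum
  | .falsum => .falsum
  | .atom p ts => .atom p fun i => (ts i).subst σ
  | .neg φ => .neg (φ.subst σ)
  | .conj φ ψ => .conj (φ.subst σ) (ψ.subst σ)
  | .disj φ ψ => .disj (φ.subst σ) (ψ.subst σ)
  | .all v φ => .all v (φ.subst (Function.update σ v (Term.var v)))
  | .ex v φ => .ex v (φ.subst (Function.update σ v (Term.var v)))

/-- A formula-based rule `A ← φ`: the head is an atom `P(t₁,…,tₛ)`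
(hence distinct from `⊤` and `⊥`) and the body is an arbitrary formula. -/
structure Rule (L : Language) : Type where
  headPred : Fin L.nPred
  headArgs : Fin (L.predAr headPred) → Term L
  body : Formula L

/-- The head of a rule, as an atomic formula. -/
def Rule.headAtom (r : Rule L) : Formula L := .atom r.headPred r.headArgs

/-- A formula-based logic program: a finite set of formula-based rules. -/
structure Program (L : Language) : Type where
  rules : Set (Rule L)
  finite : rules.Finite

/-- The set `P_G` of ground instances of a program `P`: pairs `(Aσ, φσ)` obtained
from a rule `A ← φ` of `P` and a substitution `σ` such that `Aσ` is a ground atom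
and `φσ` has no free variables. -/
def groundInstances (P : Program L) : Set (GroundAtom L × Formula L) :=
  {Aφ | ∃ r ∈ P.rules, ∃ σ : ℕ → Term L,
    (∃ hg : ∀ i, ((r.headArgs i).subst σ).ground,
      Aφ.1 = ⟨r.headPred, fun i => ⟨(r.headArgs i).subst σ, hg i⟩⟩) ∧
    Aφ.2 = r.body.subst σ ∧ (r.body.subst σ).freeVars = ∅}

/-- A default variable assignment (possible since there is at least one constant). -/
def defaultAssignment (L : Language) : ℕ → HU L :=
  fun _ => ⟨.const ⟨0, L.cpos⟩, trivial⟩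

/-- The value of a closed formula (independent of the variable assignment). -/
def Formula.evalClosed (I : Interp L) (φ : Formula L) : W :=
  φ.eval I (defaultAssignment L)

/-- The immediate consequence operator `T_P`. -/
def TP (P : Program L) (I : Interp L) : Interp L :=
  fun A => Wsup {w | ∃ φ : Formula L, (A, φ) ∈ groundInstances P ∧ w = φ.evalClosed I}

/-- `I ∥ F_β` : the set of ground atoms receiving value `F_β` under `I`. -/
def Ifalse (I : Interp L) (β : Ordinal) : Set (GroundAtom L) := {A | (I A).1 = TVPre.F β}

/-- `I ∥ T_β` : the set of ground atoms receiving value `T_β` under `I`. -/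
def Itrue (I : Interp L) (β : Ordinal) : Set (GroundAtom L) := {A | (I A).1 = TVPre.T β}

/-- `I =_α J`. -/
def eqa (α : Ordinal) (I J : Interp L) : Prop :=
  ∀ β ≤ α, Ifalse I β = Ifalse J β ∧ Itrue I β = Itrue J β

/-- `I ⊑_α J`. -/
def sqa (α : Ordinal) (I J : Interp L) : Prop :=
  (∀ β < α, eqa β I J) ∧ Ifalse J α ⊆ Ifalse I α ∧ Itrue I α ⊆ Itrue J α

/-- `I ⊏_α J`. -/
def sqlt (α : Ordinal) (I J : Interp L) : Prop := sqa α I J ∧ ¬ eqa α I J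

/-- `I ⊑_∞ J`. -/
def sqinf (I J : Interp L) : Prop := I = J ∨ ∃ α < omega1, sqlt α I J

/-- `I` satisfies the rule `A ← φ`. -/
def satisfies (I : Interp L) (r : Rule L) : Prop :=
  ∀ h : ℕ → HU L, r.body.eval I h ≤ r.headAtom.eval I h

/-- `I` is a model of `P`. -/
def isModel (I : Interp L) (P : Program L) : Prop := ∀ r ∈ P.rules, satisfies I r

/-- The transfinite iterates `T^β_{P,α}(I)`. -/
def iter (P : Program L) (α : Ordinal) (hα : α < omega1) (I : Interp L)
    (β : Ordinal) : Interp L :=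
  Ordinal.limitRecOn β I (fun _ J => TP P J)
    (fun β _ ih A =>
      if degLT (I A) α then I A
      else if ∃ γ, ∃ hγ : γ < β, (ih γ hγ A).1 = TVPre.T α then WT α hα
      else if ∀ γ, ∀ hγ : γ < β, (ih γ hγ A).1 = TVPre.F α then WF α hα
      else WF (α + 1) (succ_lt_omega1 hα))

/-- The union `⊔_{γ<α} I_γ` of a family of interpretations. -/
def unionInterp (α : Ordinal) (hα : α < omega1) (Ig : ∀ γ, γ < α → Interp L) :
    Interp L := fun A =>
  if h : ∃ ζ, ∃ hζ : ζ < α, ((Ig ζ hζ) A).1 = TVPre.F ζ ∨ ((Ig ζ hζ) A).1 = TVPre.T ζ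
  then Ig h.choose h.choose_spec.choose A
  else WF α hα

/-- The approximants `M_α` of a program `P`. -/
def approx (P : Program L) (α : Ordinal) : Interp L :=
  if hα : α < omega1 then
    if (∀ γ, ∀ _ : γ < α, ∀ ζ, ζ < γ → eqa ζ (approx P ζ) (approx P γ)) ∧
        sqa α (unionInterp α hα fun γ _ => approx P γ)
          (TP P (unionInterp α hα fun γ _ => approx P γ))
    then iter P α hα (unionInterp α hα fun γ _ => approx P γ) omega1
    else fun _ => WF 0 zero_lt_omega1
  else fun _ => WF 0 zero_lt_omega1
termination_by α
decreasing_by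
  all_goals first | assumption | exact lt_trans ‹_› ‹_›

/-- The depth `δ_P` of a program `P`. -/
def depth (P : Program L) : Ordinal :=
  sInf {δ | δ < omega1 ∧ ∀ γ, δ ≤ γ → γ < omega1 →
    Ifalse (approx P γ) γ = ∅ ∧ Itrue (approx P γ) γ = ∅}

/-- The least infinite-valued model `M_P` of a program `P`. -/
def MP (P : Program L) : Interp L := fun A =>
  if degLT (approx P (depth P) A) (depth P) then approx P (depth P) A else WZ

/-! ### Three-valued semantics -/

/-- The three truth values `F < 0 < T`. -/
inductive TV3 : Type where
  | F : TV3
  | Z : TV3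
  | T : TV3
deriving DecidableEq

/-- Numeric coding of the three truth values. -/
def TV3.toNat : TV3 → ℕ
  | .F => 0
  | .Z => 1
  | .T => 2

instance : LinearOrder TV3 :=
  LinearOrder.lift' TV3.toNat (fun a b => by
    cases a <;> cases b <;> simp [TV3.toNat])

/-- A three-valued interpretation. -/
def Interp3 (L : Language) : Type := GroundAtom L → TV3

/-- Supremum of a set of three-valued truth values. -/
def sup3 (S : Set TV3) : TV3 :=
  if TV3.T ∈ S then .T else if TV3.Z ∈ S then .Z else .F

/-- Infimum of a set of three-valued truth values. -/
def inf3 (S : Set TV3) : TV3 :=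
  if TV3.F ∈ S then .F else if TV3.Z ∈ S then .Z else .T

/-- Three-valued negation. -/
def neg3 : TV3 → TV3
  | .F => .T
  | .Z => .Z
  | .T => .F

/-- The three-valued semantics of formulas. -/
def Formula.eval3 (K : Interp3 L) : Formula L → (ℕ → HU L) → TV3
  | .verum, _ => .T
  | .falsum, _ => .F
  | .atom p ts, h => K ⟨p, fun i => (ts i).evalT h⟩
  | .neg φ, h => neg3 (φ.eval3 K h)
  | .conj φ ψ, h => min (φ.eval3 K h) (ψ.eval3 K h)
  | .disj φ ψ, h => max (φ.eval3 K h) (ψ.eval3 K h)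
  | .ex v φ, h => sup3 (Set.range fun u : HU L => φ.eval3 K (Function.update h v u))
  | .all v φ, h => inf3 (Set.range fun u : HU L => φ.eval3 K (Function.update h v u))

/-- Collapsing all false values to `F` and all true values to `T`. -/
def collapse : W → TV3 := fun w =>
  match w.1 with
  | .F _ => .F
  | .zero => .Z
  | .T _ => .T

/-- The collapse of an infinite-valued interpretation. -/
def collapseI (I : Interp L) : Interp3 L := fun A => collapse (I A)

/-- `K` is a three-valued model of `P`. -/
def isModel3 (K : Interp3 L) (P : Program L) : Prop :=
  ∀ r ∈ P.rules, ∀ h : ℕ → HU L, r.body.eval3 K h ≤ r.headAtom.eval3 K h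

/-- The three-valued interpretation `M_{P,3}`. -/
def MP3 (P : Program L) : Interp3 L := collapseI (MP P)

/-- The negation degree of a formula. -/
def Formula.negDeg : Formula L → ℕ
  | .verum => 0
  | .falsum => 0
  | .atom _ _ => 0
  | .neg φ => φ.negDeg + 1
  | .conj φ ψ => max φ.negDeg ψ.negDeg
  | .disj φ ψ => max φ.negDeg ψ.negDeg
  | .all _ φ => φ.negDeg
  | .ex _ φ => φ.negDeg

/-!
Let `deg w` be `β` for `w = F_β, T_β` and `⊤` for `w = 0`, and let `truncate α w` replace every
value of degree `> α` by `0`. Then `I =_α J` says exactly `truncate α ∘ I = truncate α ∘ J`.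
Truncation is monotone, commutes with `Wsup` and `Winf` (the two are exchanged by the symmetry
`F_β ↔ T_β`) and with negation up to truncation, so `⟦φ⟧` and hence `T_P` preserve `=_α`.
The union `J` of a coherent chain satisfies `J =_ζ I_ζ` for `ζ < α`, hence
`J =_ζ I_ζ =_ζ T_P(I_ζ) =_ζ T_P(J)`. At level `α` itself, `J` takes only the value `F_α` or values
of degree `< α`, on which it already agrees with `T_P(J)`; this gives `J ⊑_α T_P(J)`.
-/

def deg (w : W) : WithTop Ordinal :=
  match w.1 with
  | .F a => a
  | .zero => ⊤
  | .T a => a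

lemma deg_eq_coe_iff {w : W} {ζ : Ordinal} : deg w = ζ ↔ w.1 = .F ζ ∨ w.1 = .T ζ := by
  obtain ⟨a | _ | a, ha⟩ := w <;> simp [deg, eq_comm]

lemma deg_WZ : deg WZ = ⊤ := rfl

def truncate (α : Ordinal) (w : W) : W := if deg w ≤ α then w else WZ

lemma truncate_of_deg_le {α : Ordinal} {w : W} (h : deg w ≤ α) : truncate α w = w := if_pos h

lemma truncate_of_not_deg_le {α : Ordinal} {w : W} (h : ¬ deg w ≤ α) : truncate α w = WZ :=
  if_neg h

lemma truncate_WZ (α : Ordinal) : truncate α WZ = WZ :=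
  truncate_of_not_deg_le (by simp [deg_WZ])

lemma W_lt_iff {x y : W} : x < y ↔ x.1.lt y.1 := Iff.rfl

-- The values of degree `> α` form an interval around `0`.
lemma deg_le_of_WZ_le_of_le {α : Ordinal} {x y : W} (h0 : WZ ≤ x) (hxy : x ≤ y)
    (hx : deg x ≤ α) : deg y ≤ α := by
  rcases hxy.eq_or_lt with rfl | hxy
  · exact hx
  rcases h0.eq_or_lt with rfl | h0
  · exact absurd hx (by simp [deg, WZ])
  rw [W_lt_iff] at hxy h0
  obtain ⟨a | _ | a, ha⟩ := x <;> obtain ⟨b | _ | b, hb⟩ := y <;>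
    simp_all [TVPre.lt, deg, WZ]
  exact hxy.le.trans hx

lemma deg_le_of_le_WZ_of_le {α : Ordinal} {x y : W} (h0 : y ≤ WZ) (hxy : x ≤ y)
    (hy : deg y ≤ α) : deg x ≤ α := by
  rcases hxy.eq_or_lt with rfl | hxy
  · exact hy
  rcases h0.eq_or_lt with rfl | h0
  · exact absurd hy (by simp [deg, WZ])
  rw [W_lt_iff] at hxy h0
  obtain ⟨a | _ | a, ha⟩ := x <;> obtain ⟨b | _ | b, hb⟩ := y <;>
    simp_all [TVPre.lt, deg, WZ]
  exact hxy.le.trans hy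

lemma monotone_truncate (α : Ordinal) : Monotone (truncate α) := by
  intro x y hxy
  unfold truncate
  split_ifs with hx hy hy
  · exact hxy
  · exact le_of_not_gt fun h => hy (deg_le_of_WZ_le_of_le h.le hxy hx)
  · exact le_of_not_gt fun h => hx (deg_le_of_le_WZ_of_le h.le hxy hy)
  · rfl

lemma eq_of_truncate_eq {α : Ordinal} {w w' : W} (h : truncate α w = truncate α w')
    (hw : deg w ≤ α) : w' = w := by
  rw [truncate_of_deg_le hw] at h
  by_cases hw' : deg w' ≤ α
  · rwa [truncate_of_deg_le hw', eq_comm] at h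
  · rw [truncate_of_not_deg_le hw'] at h
    exact absurd hw (by simp [h, deg, WZ])

lemma eq_of_forall_val_imp {α : Ordinal} {w w' : W} (hw : deg w ≤ α)
    (h : ∀ β ≤ α, (w.1 = .F β → w'.1 = .F β) ∧ (w.1 = .T β → w'.1 = .T β)) :
    w = w' := by
  obtain ⟨a | _ | a, ha⟩ := w <;> simp only [deg, WithTop.coe_le_coe, top_le_iff,
    WithTop.coe_ne_top] at hw
  · exact Subtype.ext ((h a hw).1 rfl).symm
  · exact Subtype.ext ((h a hw).2 rfl).symm

lemma truncate_eq_truncate_iff {α : Ordinal} {w w' : W} :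
    truncate α w = truncate α w' ↔
      ∀ β ≤ α, (w.1 = .F β ↔ w'.1 = .F β) ∧ (w.1 = .T β ↔ w'.1 = .T β) := by
  constructor
  · intro h β hβ
    refine ⟨⟨fun hF => ?_, fun hF => ?_⟩, ⟨fun hT => ?_, fun hT => ?_⟩⟩
    · rwa [eq_of_truncate_eq h (deg_eq_coe_iff.2 (Or.inl hF) ▸ WithTop.coe_le_coe.2 hβ)]
    · rwa [eq_of_truncate_eq h.symm (deg_eq_coe_iff.2 (Or.inl hF) ▸ WithTop.coe_le_coe.2 hβ)]
    · rwa [eq_of_truncate_eq h (deg_eq_coe_iff.2 (Or.inr hT) ▸ WithTop.coe_le_coe.2 hβ)]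
    · rwa [eq_of_truncate_eq h.symm (deg_eq_coe_iff.2 (Or.inr hT) ▸ WithTop.coe_le_coe.2 hβ)]
  · intro h
    by_cases hw : deg w ≤ α
    · rw [eq_of_forall_val_imp hw fun β hβ => ⟨(h β hβ).1.1, (h β hβ).2.1⟩]
    by_cases hw' : deg w' ≤ α
    · rw [eq_of_forall_val_imp hw' fun β hβ => ⟨(h β hβ).1.2, (h β hβ).2.2⟩]
    rw [truncate_of_not_deg_le hw, truncate_of_not_deg_le hw']

lemma deg_Wneg (w : W) : deg (Wneg w) = deg w + 1 := by
  obtain ⟨a | _ | a, ha⟩ := w <;> rfl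

lemma truncate_Wneg (α : Ordinal) (w : W) :
    truncate α (Wneg (truncate α w)) = truncate α (Wneg w) := by
  by_cases hw : deg w ≤ α
  · rw [truncate_of_deg_le hw]
  have hneg : ¬ deg (Wneg w) ≤ α := fun h => hw (le_self_add.trans (deg_Wneg w ▸ h))
  rw [truncate_of_not_deg_le hw, truncate_of_not_deg_le hneg]
  exact truncate_WZ α

lemma TIdx_image_truncate (α : Ordinal) (M : Set W) :
    TIdx (truncate α '' M) = TIdx M ∩ Set.Iic α := by
  ext a
  constructor
  · rintro ⟨_, ⟨x, hx, rfl⟩, hxa⟩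
    by_cases hxα : deg x ≤ α
    · rw [truncate_of_deg_le hxα] at hxa
      rw [deg_eq_coe_iff.2 (Or.inr hxa)] at hxα
      exact ⟨⟨x, hx, hxa⟩, WithTop.coe_le_coe.1 hxα⟩
    · rw [truncate_of_not_deg_le hxα] at hxa
      cases hxa
  · rintro ⟨⟨x, hx, hxa⟩, haα⟩
    have hxα : deg x ≤ α := by
      rw [deg_eq_coe_iff.2 (Or.inr hxa)]
      exact WithTop.coe_le_coe.2 haα
    exact ⟨x, ⟨x, hx, truncate_of_deg_le hxα⟩, hxa⟩

lemma WZ_mem_image_truncate {α : Ordinal} {M : Set W} :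
    WZ ∈ truncate α '' M ↔ ∃ x ∈ M, ¬ deg x ≤ α := by
  constructor
  · rintro ⟨x, hx, hxz⟩
    refine ⟨x, hx, fun hxα => ?_⟩
    rw [truncate_of_deg_le hxα] at hxz
    simp [hxz, deg_WZ] at hxα
  · rintro ⟨x, hx, hxα⟩
    exact ⟨x, hx, truncate_of_not_deg_le hxα⟩

lemma not_deg_Wsup_le {α : Ordinal} {M : Set W} (hT : ∀ a ∈ TIdx M, α < a)
    {x : W} (hx : x ∈ M) (hxα : ¬ deg x ≤ α) : ¬ deg (Wsup M) ≤ α := by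
  unfold Wsup
  split_ifs with hne hZ hs
  · simpa [WT, deg] using hT _ (csInf_mem hne)
  · simp [deg_WZ]
  · obtain ⟨a | _ | a, ha⟩ := x
    · have hγ : a ∈ FIdx M := ⟨_, hx, rfl⟩
      have hbdd : BddAbove (FIdx M) := ⟨omega1, fun _ h => (mem_lt_omega1_of_FIdx h).le⟩
      have : α < sSup (FIdx M) :=
        (by simpa [deg] using hxα : α < a).trans_le (le_csSup hbdd hγ)
      simpa [WF, deg] using this
    · exact absurd hx hZ
    · exact absurd ⟨a, _, hx, rfl⟩ hne
  · simp [deg_WZ]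

lemma truncate_Wsup_of_forall_deg_le {α : Ordinal} {M : Set W} (hM : ∀ x ∈ M, deg x ≤ α) :
    truncate α (Wsup M) = Wsup M := by
  unfold Wsup
  split_ifs with hne hZ hs
  · obtain ⟨x, hx, hxa⟩ := csInf_mem hne
    have hxα := hM x hx
    rw [deg_eq_coe_iff.2 (Or.inr hxa)] at hxα
    exact truncate_of_deg_le hxα
  · exact truncate_WZ α
  · refine truncate_of_deg_le (WithTop.coe_le_coe.2 (csSup_le' fun a ⟨x, hx, hxa⟩ => ?_))
    exact WithTop.coe_le_coe.1 (deg_eq_coe_iff.2 (Or.inl hxa) ▸ hM x hx)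
  · exact truncate_WZ α

lemma truncate_Wsup (α : Ordinal) (M : Set W) :
    truncate α (Wsup M) = Wsup (truncate α '' M) := by
  -- Either `M` has a true value of degree `≤ α` (then both sups are the least-index one), or
  -- it has a value of degree `> α` (then both sides are `0`), or `truncate α` fixes `M`.
  by_cases hT : ∃ a ∈ TIdx M, a ≤ α
  · obtain ⟨a, haM, haα⟩ := hT
    have hne : (TIdx M).Nonempty := ⟨a, haM⟩
    have hinf_le : sInf (TIdx M) ≤ α := (csInf_le' haM).trans haα
    have hne' : (TIdx (truncate α '' M)).Nonempty :=
      ⟨sInf (TIdx M), by rw [TIdx_image_truncate]; exact ⟨csInf_mem hne, hinf_le⟩⟩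
    have hinf : sInf (TIdx (truncate α '' M)) = sInf (TIdx M) := by
      rw [TIdx_image_truncate]
      exact le_antisymm (csInf_le' ⟨csInf_mem hne, hinf_le⟩)
        (le_csInf (TIdx_image_truncate α M ▸ hne') fun b hb => csInf_le' hb.1)
    have hdeg : deg (Wsup M) ≤ α := by
      unfold Wsup
      rw [dif_pos hne]
      exact WithTop.coe_le_coe.2 hinf_le
    rw [truncate_of_deg_le hdeg]
    unfold Wsup
    rw [dif_pos hne, dif_pos hne']
    exact Subtype.ext (congrArg TVPre.T hinf.symm)
  push Not at hT
  by_cases hhigh : ∃ x ∈ M, ¬ deg x ≤ α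
  · obtain ⟨x, hx, hxα⟩ := hhigh
    have hT' : ¬ (TIdx (truncate α '' M)).Nonempty := by
      rw [TIdx_image_truncate]
      rintro ⟨a, ha, haα⟩
      exact (hT a ha).not_ge haα
    rw [truncate_of_not_deg_le (not_deg_Wsup_le hT hx hxα)]
    unfold Wsup
    rw [dif_neg hT', if_pos (WZ_mem_image_truncate.2 ⟨x, hx, hxα⟩)]
  push Not at hhigh
  rw [truncate_Wsup_of_forall_deg_le hhigh,
    Set.image_congr fun x hx => truncate_of_deg_le (hhigh x hx), Set.image_id']

def swapFT : W → W
  | ⟨.F a, h⟩ => ⟨.T a, h⟩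
  | ⟨.zero, h⟩ => ⟨.zero, h⟩
  | ⟨.T a, h⟩ => ⟨.F a, h⟩

@[simp] lemma swapFT_swapFT (w : W) : swapFT (swapFT w) = w := by
  obtain ⟨a | _ | a, ha⟩ := w <;> rfl

lemma deg_swapFT (w : W) : deg (swapFT w) = deg w := by
  obtain ⟨a | _ | a, ha⟩ := w <;> rfl

lemma truncate_swapFT (α : Ordinal) (w : W) :
    truncate α (swapFT w) = swapFT (truncate α w) := by
  unfold truncate
  rw [deg_swapFT]
  split_ifs <;> rfl

lemma mem_image_swapFT {M : Set W} {w : W} : w ∈ swapFT '' M ↔ swapFT w ∈ M :=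
  ⟨by rintro ⟨x, hx, rfl⟩; simpa using hx, fun h => ⟨_, h, swapFT_swapFT w⟩⟩

lemma TIdx_image_swapFT (M : Set W) : TIdx (swapFT '' M) = FIdx M := by
  ext a
  constructor
  · rintro ⟨_, ⟨⟨b | _ | b, hb⟩, hx, rfl⟩, h⟩ <;> cases h
    exact ⟨_, hx, rfl⟩
  · rintro ⟨x, hx, h⟩
    exact ⟨swapFT x, ⟨x, hx, rfl⟩, by obtain ⟨b | _ | b, hb⟩ := x <;> cases h; rfl⟩

lemma FIdx_image_swapFT (M : Set W) : FIdx (swapFT '' M) = TIdx M := by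
  rw [← TIdx_image_swapFT, Set.image_image]
  simp

lemma Winf_eq_swapFT_Wsup (M : Set W) : Winf M = swapFT (Wsup (swapFT '' M)) := by
  have hZ : WZ ∈ swapFT '' M ↔ WZ ∈ M := mem_image_swapFT
  unfold Winf Wsup
  simp only [TIdx_image_swapFT, FIdx_image_swapFT, hZ]
  split_ifs <;> rfl

lemma truncate_Winf (α : Ordinal) (M : Set W) :
    truncate α (Winf M) = Winf (truncate α '' M) := by
  rw [Winf_eq_swapFT_Wsup, Winf_eq_swapFT_Wsup, truncate_swapFT, truncate_Wsup, Set.image_image,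
    Set.image_image]
  simp only [truncate_swapFT]

lemma eqa_iff_truncate {α : Ordinal} {I J : Interp L} :
    eqa α I J ↔ ∀ A, truncate α (I A) = truncate α (J A) := by
  simp only [truncate_eq_truncate_iff, eqa, Set.ext_iff, Ifalse, Itrue, Set.mem_ofPred_eq]
  exact ⟨fun h A β hβ => ⟨(h β hβ).1 A, (h β hβ).2 A⟩,
    fun h β hβ => ⟨fun A => (h A β hβ).1, fun A => (h A β hβ).2⟩⟩

lemma eqa.symm {α : Ordinal} {I J : Interp L} (h : eqa α I J) : eqa α J I :=
  fun β hβ => ⟨(h β hβ).1.symm, (h β hβ).2.symm⟩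

lemma eqa.trans {α : Ordinal} {I J K : Interp L} (h₁ : eqa α I J)
    (h₂ : eqa α J K) : eqa α I K :=
  fun β hβ => ⟨(h₁ β hβ).1.trans (h₂ β hβ).1, (h₁ β hβ).2.trans (h₂ β hβ).2⟩

lemma truncate_eval_eq {α : Ordinal} {I J : Interp L}
    (h : ∀ A, truncate α (I A) = truncate α (J A)) (φ : Formula L) (g : ℕ → HU L) :
    truncate α (φ.eval I g) = truncate α (φ.eval J g) := by
  induction φ generalizing g with
  | verum | falsum => rfl
  | atom p ts => exact h _
  | neg φ ih => simp only [Formula.eval]; rw [← truncate_Wneg, ih, truncate_Wneg]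
  | conj φ ψ ihφ ihψ => simp only [Formula.eval, (monotone_truncate α).map_min, ihφ, ihψ]
  | disj φ ψ ihφ ihψ => simp only [Formula.eval, (monotone_truncate α).map_max, ihφ, ihψ]
  | all v φ ih =>
    simp only [Formula.eval, truncate_Winf, ← Set.range_comp, Function.comp_def, ih]
  | ex v φ ih =>
    simp only [Formula.eval, truncate_Wsup, ← Set.range_comp, Function.comp_def, ih]

lemma TP_eqa {α : Ordinal} {I J : Interp L} (P : Program L) (h : eqa α I J) :
    eqa α (TP P I) (TP P J) := by
  rw [eqa_iff_truncate] at h ⊢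
  intro A
  have hset : ∀ K : Interp L,
      {w | ∃ φ : Formula L, (A, φ) ∈ groundInstances P ∧ w = φ.evalClosed K} =
        (fun φ => φ.evalClosed K) '' {φ | (A, φ) ∈ groundInstances P} := by
    intro K
    ext w
    simp [eq_comm]
  unfold TP
  rw [hset, hset, truncate_Wsup, truncate_Wsup, Set.image_image, Set.image_image]
  simp only [Formula.evalClosed, truncate_eval_eq h]

section Union

variable {α : Ordinal} (hα : α < omega1) {Ig : Ordinal → Interp L}

lemma unionInterp_cases (A : GroundAtom L) :
    (∃ ζ < α, unionInterp α hα (fun γ _ => Ig γ) A = Ig ζ A ∧ deg (Ig ζ A) = ζ) ∨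
      (unionInterp α hα (fun γ _ => Ig γ) A = WF α hα ∧
        ∀ ζ < α, deg (Ig ζ A) ≠ ζ) := by
  unfold unionInterp
  split_ifs with h
  · exact Or.inl ⟨_, h.choose_spec.choose, rfl, deg_eq_coe_iff.2 h.choose_spec.choose_spec⟩
  · exact Or.inr ⟨rfl, fun ζ hζ hdeg => h ⟨ζ, hζ, deg_eq_coe_iff.1 hdeg⟩⟩

lemma unionInterp_val_eq_F_or_deg_lt (A : GroundAtom L) :
    (unionInterp α hα (fun γ _ => Ig γ) A).1 = .F α ∨
      deg (unionInterp α hα (fun γ _ => Ig γ) A) < α := by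
  rcases unionInterp_cases hα A with ⟨ζ, hζ, hJ, hdeg⟩ | ⟨hJ, -⟩
  · exact Or.inr (hJ ▸ hdeg ▸ WithTop.coe_lt_coe.2 hζ)
  · exact Or.inl (hJ ▸ rfl)

lemma eqa_unionInterp (hcoh : ∀ γ < α, ∀ ζ < γ, eqa ζ (Ig ζ) (Ig γ)) {ζ : Ordinal}
    (hζ : ζ < α) : eqa ζ (unionInterp α hα fun γ _ => Ig γ) (Ig ζ) := by
  rw [eqa_iff_truncate]
  intro A
  rcases unionInterp_cases hα A with ⟨ξ, hξ, hJ, hdeg⟩ | ⟨hJ, hnot⟩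
  · rw [hJ]
    rcases le_or_gt ξ ζ with hξζ | hζξ
    · rcases hξζ.eq_or_lt with rfl | hξζ
      · rfl
      rw [eq_of_truncate_eq (eqa_iff_truncate.1 (hcoh ζ hζ ξ hξζ) A) hdeg.le]
    · exact (eqa_iff_truncate.1 (hcoh ξ hξ ζ hζξ) A).symm
  · rw [hJ, truncate_of_not_deg_le (by simpa [WF, deg] using hζ)]
    refine (truncate_of_not_deg_le fun hle => ?_).symm
    obtain ⟨ξ, hξ⟩ := WithTop.ne_top_iff_exists.1 (ne_top_of_le_ne_top WithTop.coe_ne_top hle)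
    have hξζ : ξ ≤ ζ := WithTop.coe_le_coe.1 (hξ ▸ hle)
    rcases hξζ.eq_or_lt with rfl | hξζ
    · exact hnot ξ hζ hξ.symm
    have := eq_of_truncate_eq (eqa_iff_truncate.1 (hcoh ζ hζ ξ hξζ) A).symm hξ.ge
    exact hnot ξ (hξζ.trans hζ) (this ▸ hξ.symm)

end Union

lemma sqa_of_forall_eqa_of_deg_lt {α : Ordinal} {I K : Interp L}
    (hbelow : ∀ β < α, eqa β I K) (hI : ∀ A, (I A).1 = .F α ∨ deg (I A) < α) :
    sqa α I K := by
  refine ⟨hbelow, fun A hA => ?_, fun A hA => ?_⟩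
  · rcases hI A with h | h
    · exact h
    obtain ⟨ξ, hξ⟩ := WithTop.ne_top_iff_exists.1 (ne_top_of_lt h)
    have hξα : ξ < α := WithTop.coe_lt_coe.1 (hξ ▸ h)
    have hKI := eq_of_truncate_eq (eqa_iff_truncate.1 (hbelow ξ hξα) A) hξ.ge
    have : deg (K A) = α := deg_eq_coe_iff.2 (Or.inl hA)
    rw [hKI, ← hξ, WithTop.coe_inj] at this
    exact absurd this hξα.ne
  · have hdeg : deg (I A) = α := deg_eq_coe_iff.2 (Or.inr hA)
    rcases hI A with h | h
    · rw [show (I A).1 = _ from hA] at h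
      cases h
    · exact absurd hdeg h.ne

/-- the union of a coherent chain of prefixed points is a prefixed point. -/
theorem union_sqa_TP {L : Language} (P : Program L) (α : Ordinal) (hα : α < omega1)
    (Ig : Ordinal → Interp L)
    (hcoh : ∀ γ < α, ∀ ζ < γ, eqa ζ (Ig ζ) (Ig γ))
    (hstep : ∀ γ < α, sqa (γ + 1) (Ig γ) (TP P (Ig γ))) :
    sqa α (unionInterp α hα fun γ _ => Ig γ)
      (TP P (unionInterp α hα fun γ _ => Ig γ)) := by
  refine sqa_of_forall_eqa_of_deg_lt (fun β hβ => ?_) (unionInterp_val_eq_F_or_deg_lt hα)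
  have hJ := eqa_unionInterp hα hcoh hβ
  exact (hJ.trans ((hstep β hβ).1 β (lt_add_one β))).trans (TP_eqa P hJ.symm)

end ILP
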